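/- Under the permutation missingness model, define ζ(y) = P(R₂=1 | R₁=1, Y¹=y), α(x) = E(1/ζ(Y¹) | R₁=1, R₂=1, X¹=x), β(x) = E(Y¹/ζ(Y¹) | R₁=1, R₂=1, X¹=x), and θ = E( β(X¹)/α(X¹) | R₁=0, R₂=1 ). Then E(Y¹) = P(R₁=1) · E(Y¹ | R₁=1) + P(R₁=0) · θ, and moreover θ = E(Y¹ | R₁=0). -/

import Mathlib

open MeasureTheory

/-- `pr μ s` is the probability of the event `s`, as a real number. -/
noncomputable def pr {Ω : Type*} [MeasurableSpace Ω] (μ : Measure Ω) (s : Set Ω) : ℝ :=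
  (μ s).toReal

/-- `cpr μ s t` is the conditional probability of `s` given `t`, as a real number. -/
noncomputable def cpr {Ω : Type*} [MeasurableSpace Ω] (μ : Measure Ω) (s t : Set Ω) : ℝ :=
  pr μ (s ∩ t) / pr μ t

/-- `ζ(y) = P(R₂ = 1 | R₁ = 1, Y¹ = y)`. -/
noncomputable def zetaPM {Ω : Type*} [MeasurableSpace Ω] (μ : Measure Ω)
    (Y1 : Ω → ℝ) (R1 R2 : Ω → Bool) (y : ℝ) : ℝ :=
  cpr μ {ω | R2 ω = true} {ω | R1 ω = true ∧ Y1 ω = y}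

/-- `α(x) = E(1/ζ(Y¹) | R₁ = 1, R₂ = 1, X¹ = x)`, as a finite sum over the range `𝒴`. -/
noncomputable def alphaPM {Ω 𝒳 : Type*} [MeasurableSpace Ω] (μ : Measure Ω)
    (Y1 : Ω → ℝ) (X1 : Ω → 𝒳) (R1 R2 : Ω → Bool) (𝒴 : Finset ℝ) (x : 𝒳) : ℝ :=
  ∑ y ∈ 𝒴, (1 / zetaPM μ Y1 R1 R2 y) *
    cpr μ {ω | Y1 ω = y} {ω | R1 ω = true ∧ R2 ω = true ∧ X1 ω = x}

/-- `β(x) = E(Y¹/ζ(Y¹) | R₁ = 1, R₂ = 1, X¹ = x)`, as a finite sum over the range `𝒴`. -/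
noncomputable def betaPM {Ω 𝒳 : Type*} [MeasurableSpace Ω] (μ : Measure Ω)
    (Y1 : Ω → ℝ) (X1 : Ω → 𝒳) (R1 R2 : Ω → Bool) (𝒴 : Finset ℝ) (x : 𝒳) : ℝ :=
  ∑ y ∈ 𝒴, (y / zetaPM μ Y1 R1 R2 y) *
    cpr μ {ω | Y1 ω = y} {ω | R1 ω = true ∧ R2 ω = true ∧ X1 ω = x}

/-- `θ = E(β(X¹)/α(X¹) | R₁ = 0, R₂ = 1)`, as a finite sum over `𝒳`. -/
noncomputable def thetaPM {Ω 𝒳 : Type*} [MeasurableSpace Ω] [Fintype 𝒳] (μ : Measure Ω)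
    (Y1 : Ω → ℝ) (X1 : Ω → 𝒳) (R1 R2 : Ω → Bool) (𝒴 : Finset ℝ) : ℝ :=
  ∑ x : 𝒳, (betaPM μ Y1 X1 R1 R2 𝒴 x / alphaPM μ Y1 X1 R1 R2 𝒴 x) *
    cpr μ {ω | X1 ω = x} {ω | R1 ω = false ∧ R2 ω = true}

/-!
Completely observed units (`R₁ = R₂ = 1`) with outcome `y` and covariate `x` have probability
`ζ(y) P(R₁=1, Y¹=y, X¹=x)`, because given `R₁ = 1, Y¹ = y` the indicator `R₂` is independent of
`X¹`. Reweighting them by `1/ζ` therefore recovers the law of `Y¹` given `R₁ = 1, X¹ = x`, so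
`β(x)/α(x) = E(Y¹ | R₁=1, X¹=x)`, which by `R₁ ⫫ Y¹ | X¹` is `E(Y¹ | R₁=0, X¹=x)`. Given
`R₁ = 0`, `R₂` is independent of `(Y¹, X¹)`, so the law of `X¹` given `R₁=0, R₂=1` is its law
given `R₁=0`, and averaging over it yields `θ = E(Y¹ | R₁=0)`. The first identity is then the law
of total expectation over `R₁`.
-/

section Probability

variable {Ω : Type*} [MeasurableSpace Ω] {μ : Measure Ω} [IsFiniteMeasure μ]

lemma pr_mono {s t : Set Ω} (h : s ⊆ t) : pr μ s ≤ pr μ t :=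
  ENNReal.toReal_mono (measure_ne_top μ t) (measure_mono h)

/-- No positivity assumption is needed: if `pr μ t = 0` then also `pr μ (s ∩ t) = 0`. -/
lemma pr_mul_cpr (s t : Set Ω) : pr μ t * cpr μ s t = pr μ (s ∩ t) := by
  rcases eq_or_ne (pr μ t) 0 with ht | ht
  · have hst : pr μ (s ∩ t) = 0 :=
      le_antisymm (ht ▸ pr_mono Set.inter_subset_right) ENNReal.toReal_nonneg
    rw [ht, hst, zero_mul]
  · exact mul_div_cancel₀ _ ht

lemma pr_inter_inter_eq_cpr_mul {s₁ s₂ t : Set Ω}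
    (h : cpr μ (s₁ ∩ s₂) t = cpr μ s₁ t * cpr μ s₂ t) :
    pr μ (s₁ ∩ s₂ ∩ t) = cpr μ s₁ t * pr μ (s₂ ∩ t) := by
  rw [← pr_mul_cpr, ← pr_mul_cpr, h]
  ring

lemma pr_eq_sum_pr_inter {ι : Type*} [MeasurableSpace ι] [MeasurableSingletonClass ι]
    {g : Ω → ι} (hg : Measurable g) {s : Finset ι} (hs : ∀ ω, g ω ∈ s) (t : Set Ω) :
    pr μ t = ∑ i ∈ s, pr μ ({ω | g ω = i} ∩ t) := by
  have hfib : ∀ i, MeasurableSet {ω | g ω = i} := fun i => hg (measurableSet_singleton i)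
  have hsum := sum_measure_preimage_singleton (μ := μ.restrict t) s fun i _ => hfib i
  rw [Set.preimage_eq_univ_iff.2 (fun _ ⟨ω, hω⟩ => hω ▸ hs ω), Measure.restrict_apply_univ] at hsum
  simp only [pr, ← hsum, Measure.restrict_apply (hfib _), Set.preimage, Set.mem_singleton_iff]
  exact ENNReal.toReal_sum fun i _ => measure_ne_top μ _

lemma sum_mul_pr_eq_add_sum_mul_cpr {R : Ω → Bool} (hR : Measurable R) (Y : Ω → ℝ)
    (𝒴 : Finset ℝ) :
    ∑ y ∈ 𝒴, y * pr μ {ω | Y ω = y} =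
      pr μ {ω | R ω = true} * ∑ y ∈ 𝒴, y * cpr μ {ω | Y ω = y} {ω | R ω = true} +
        pr μ {ω | R ω = false} * ∑ y ∈ 𝒴, y * cpr μ {ω | Y ω = y} {ω | R ω = false} := by
  simp only [Finset.mul_sum, ← Finset.sum_add_distrib]
  refine Finset.sum_congr rfl fun y _ => ?_
  rw [pr_eq_sum_pr_inter hR (fun _ => Finset.mem_univ _), Fintype.sum_bool,
    mul_left_comm, pr_mul_cpr, mul_left_comm, pr_mul_cpr, Set.inter_comm {ω | Y ω = y},
    Set.inter_comm {ω | Y ω = y}, mul_add]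

end Probability

section PermutationModel

variable {Ω 𝒳 : Type*} [MeasurableSpace Ω] {μ : Measure Ω} [IsFiniteMeasure μ]
  {Y1 : Ω → ℝ} {X1 : Ω → 𝒳} {R1 R2 : Ω → Bool} {𝒴 : Finset ℝ}

lemma zetaPM_pos {y : ℝ} {x : 𝒳}
    (h : 0 < pr μ {ω | R1 ω = true ∧ R2 ω = true ∧ Y1 ω = y ∧ X1 ω = x}) :
    0 < zetaPM μ Y1 R1 R2 y :=
  div_pos (h.trans_le (pr_mono fun _ hω => ⟨hω.2.1, hω.1, hω.2.2.1⟩))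
    (h.trans_le (pr_mono fun _ hω => ⟨hω.1, hω.2.2.1⟩))

lemma pr_complete_case_eq_zetaPM_mul {y : ℝ} {x : 𝒳}
    (h : cpr μ {ω | R2 ω = true ∧ X1 ω = x} {ω | R1 ω = true ∧ Y1 ω = y} =
      cpr μ {ω | R2 ω = true} {ω | R1 ω = true ∧ Y1 ω = y} *
        cpr μ {ω | X1 ω = x} {ω | R1 ω = true ∧ Y1 ω = y}) :
    pr μ {ω | R1 ω = true ∧ R2 ω = true ∧ Y1 ω = y ∧ X1 ω = x} =
      zetaPM μ Y1 R1 R2 y * pr μ {ω | R1 ω = true ∧ Y1 ω = y ∧ X1 ω = x} := by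
  have hfac := pr_inter_inter_eq_cpr_mul (s₁ := {ω | R2 ω = true}) (s₂ := {ω | X1 ω = x}) h
  rw [zetaPM]
  simp only [Set.ofPred_and, Set.inter_assoc, Set.inter_comm, Set.inter_left_comm] at hfac ⊢
  exact hfac

lemma sum_div_zetaPM_mul_cpr {x : 𝒳} (f : ℝ → ℝ)
    (hpos : ∀ y ∈ 𝒴, 0 < pr μ {ω | R1 ω = true ∧ R2 ω = true ∧ Y1 ω = y ∧ X1 ω = x})
    (hcc : ∀ y ∈ 𝒴, pr μ {ω | R1 ω = true ∧ R2 ω = true ∧ Y1 ω = y ∧ X1 ω = x} =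
      zetaPM μ Y1 R1 R2 y * pr μ {ω | R1 ω = true ∧ Y1 ω = y ∧ X1 ω = x}) :
    ∑ y ∈ 𝒴, f y / zetaPM μ Y1 R1 R2 y *
        cpr μ {ω | Y1 ω = y} {ω | R1 ω = true ∧ R2 ω = true ∧ X1 ω = x} =
      (∑ y ∈ 𝒴, f y * pr μ {ω | R1 ω = true ∧ Y1 ω = y ∧ X1 ω = x}) /
        pr μ {ω | R1 ω = true ∧ R2 ω = true ∧ X1 ω = x} := by
  rw [Finset.sum_div]
  refine Finset.sum_congr rfl fun y hy => ?_
  have hζ := (zetaPM_pos (hpos y hy)).ne'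
  have hnum : pr μ ({ω | Y1 ω = y} ∩ {ω | R1 ω = true ∧ R2 ω = true ∧ X1 ω = x}) =
      zetaPM μ Y1 R1 R2 y * pr μ {ω | R1 ω = true ∧ Y1 ω = y ∧ X1 ω = x} := by
    rw [← hcc y hy]
    simp only [Set.ofPred_and, Set.inter_assoc, Set.inter_comm, Set.inter_left_comm]
  rw [cpr, hnum]
  field_simp

lemma betaPM_div_alphaPM {x : 𝒳} (hY : Measurable Y1)
    (hrange : ∀ ω, Y1 ω ∈ 𝒴)
    (hpos : ∀ y ∈ 𝒴, 0 < pr μ {ω | R1 ω = true ∧ R2 ω = true ∧ Y1 ω = y ∧ X1 ω = x})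
    (hcc : ∀ y ∈ 𝒴, pr μ {ω | R1 ω = true ∧ R2 ω = true ∧ Y1 ω = y ∧ X1 ω = x} =
      zetaPM μ Y1 R1 R2 y * pr μ {ω | R1 ω = true ∧ Y1 ω = y ∧ X1 ω = x})
    (h𝒴 : 𝒴.Nonempty) :
    betaPM μ Y1 X1 R1 R2 𝒴 x / alphaPM μ Y1 X1 R1 R2 𝒴 x =
      (∑ y ∈ 𝒴, y * pr μ {ω | R1 ω = true ∧ Y1 ω = y ∧ X1 ω = x}) /
        pr μ {ω | R1 ω = true ∧ X1 ω = x} := by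
  obtain ⟨y₀, hy₀⟩ := h𝒴
  have hcc₀ : 0 < pr μ {ω | R1 ω = true ∧ R2 ω = true ∧ X1 ω = x} :=
    (hpos y₀ hy₀).trans_le (pr_mono fun _ hω => ⟨hω.1, hω.2.1, hω.2.2.2⟩)
  have hβ : betaPM μ Y1 X1 R1 R2 𝒴 x =
      (∑ y ∈ 𝒴, y * pr μ {ω | R1 ω = true ∧ Y1 ω = y ∧ X1 ω = x}) /
        pr μ {ω | R1 ω = true ∧ R2 ω = true ∧ X1 ω = x} :=
    sum_div_zetaPM_mul_cpr (fun y => y) hpos hcc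
  have hα : alphaPM μ Y1 X1 R1 R2 𝒴 x =
      pr μ {ω | R1 ω = true ∧ X1 ω = x} / pr μ {ω | R1 ω = true ∧ R2 ω = true ∧ X1 ω = x} := by
    rw [alphaPM, sum_div_zetaPM_mul_cpr (fun _ => 1) hpos hcc,
      pr_eq_sum_pr_inter hY hrange {ω | R1 ω = true ∧ X1 ω = x}]
    simp only [one_mul, Set.ofPred_and, Set.inter_assoc, Set.inter_comm, Set.inter_left_comm]
  rw [hβ, hα, div_div_div_cancel_right₀ hcc₀.ne']

lemma sum_mul_pr_R1_Y1_X1_eq_cpr_mul {r : Bool} {x : 𝒳}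
    (h : ∀ y, cpr μ {ω | R1 ω = r ∧ Y1 ω = y} {ω | X1 ω = x} =
      cpr μ {ω | R1 ω = r} {ω | X1 ω = x} * cpr μ {ω | Y1 ω = y} {ω | X1 ω = x}) :
    ∑ y ∈ 𝒴, y * pr μ {ω | R1 ω = r ∧ Y1 ω = y ∧ X1 ω = x} =
      cpr μ {ω | R1 ω = r} {ω | X1 ω = x} * ∑ y ∈ 𝒴, y * pr μ {ω | Y1 ω = y ∧ X1 ω = x} := by
  rw [Finset.mul_sum]
  refine Finset.sum_congr rfl fun y _ => ?_
  have hfac := pr_inter_inter_eq_cpr_mul (s₁ := {ω | R1 ω = r}) (s₂ := {ω | Y1 ω = y}) (h y)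
  rw [mul_left_comm]
  simp only [Set.ofPred_and, Set.inter_comm, Set.inter_left_comm] at hfac ⊢
  rw [hfac]

lemma cpr_X1_R1_false_R2_true_eq_div {x : 𝒳}
    (hY : Measurable Y1) (hrange : ∀ ω, Y1 ω ∈ 𝒴)
    (h : ∀ y, cpr μ {ω | R2 ω = true ∧ Y1 ω = y ∧ X1 ω = x} {ω | R1 ω = false} =
      cpr μ {ω | R2 ω = true} {ω | R1 ω = false} *
        cpr μ {ω | Y1 ω = y ∧ X1 ω = x} {ω | R1 ω = false})
    (hobs : 0 < pr μ {ω | R1 ω = false ∧ R2 ω = true}) :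
    cpr μ {ω | X1 ω = x} {ω | R1 ω = false ∧ R2 ω = true} =
      pr μ {ω | R1 ω = false ∧ X1 ω = x} / pr μ {ω | R1 ω = false} := by
  have hden : pr μ {ω | R1 ω = false ∧ R2 ω = true} =
      pr μ {ω | R1 ω = false} * cpr μ {ω | R2 ω = true} {ω | R1 ω = false} := by
    rw [pr_mul_cpr]
    simp only [Set.ofPred_and, Set.inter_comm]
  have hnum : pr μ ({ω | X1 ω = x} ∩ {ω | R1 ω = false ∧ R2 ω = true}) =
      cpr μ {ω | R2 ω = true} {ω | R1 ω = false} * pr μ {ω | R1 ω = false ∧ X1 ω = x} := by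
    rw [pr_eq_sum_pr_inter hY hrange, pr_eq_sum_pr_inter hY hrange {ω | R1 ω = false ∧ X1 ω = x},
      Finset.mul_sum]
    refine Finset.sum_congr rfl fun y _ => ?_
    have hfac := pr_inter_inter_eq_cpr_mul
      (s₁ := {ω | R2 ω = true}) (s₂ := {ω | Y1 ω = y ∧ X1 ω = x}) (h y)
    simp only [Set.ofPred_and, Set.inter_assoc, Set.inter_comm, Set.inter_left_comm] at hfac ⊢
    exact hfac
  have hc := right_ne_zero_of_mul (hden ▸ hobs.ne')
  rw [cpr, hnum, hden, mul_comm (pr μ _), mul_div_mul_left _ _ hc]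

lemma betaPM_div_alphaPM_mul_cpr {x : 𝒳} (hY : Measurable Y1)
    (hrange : ∀ ω, Y1 ω ∈ 𝒴)
    (hCI1 : ∀ (r : Bool) (y : ℝ), cpr μ {ω | R1 ω = r ∧ Y1 ω = y} {ω | X1 ω = x} =
      cpr μ {ω | R1 ω = r} {ω | X1 ω = x} * cpr μ {ω | Y1 ω = y} {ω | X1 ω = x})
    (hpos : ∀ y ∈ 𝒴, 0 < pr μ {ω | R1 ω = true ∧ R2 ω = true ∧ Y1 ω = y ∧ X1 ω = x})
    (hcc : ∀ y ∈ 𝒴, pr μ {ω | R1 ω = true ∧ R2 ω = true ∧ Y1 ω = y ∧ X1 ω = x} =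
      zetaPM μ Y1 R1 R2 y * pr μ {ω | R1 ω = true ∧ Y1 ω = y ∧ X1 ω = x})
    (hw : cpr μ {ω | X1 ω = x} {ω | R1 ω = false ∧ R2 ω = true} =
      pr μ {ω | R1 ω = false ∧ X1 ω = x} / pr μ {ω | R1 ω = false})
    (h𝒴 : 𝒴.Nonempty) :
    betaPM μ Y1 X1 R1 R2 𝒴 x / alphaPM μ Y1 X1 R1 R2 𝒴 x *
        cpr μ {ω | X1 ω = x} {ω | R1 ω = false ∧ R2 ω = true} =
      (∑ y ∈ 𝒴, y * pr μ {ω | R1 ω = false ∧ Y1 ω = y ∧ X1 ω = x}) /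
        pr μ {ω | R1 ω = false} := by
  have hb : ∀ r, pr μ {ω | R1 ω = r ∧ X1 ω = x} =
      pr μ {ω | X1 ω = x} * cpr μ {ω | R1 ω = r} {ω | X1 ω = x} := fun r =>
    (pr_mul_cpr _ _).symm
  obtain ⟨y₀, hy₀⟩ := h𝒴
  have hb₁ : 0 < pr μ {ω | R1 ω = true ∧ X1 ω = x} :=
    (hpos y₀ hy₀).trans_le (pr_mono fun _ hω => ⟨hω.1, hω.2.2.2⟩)
  rw [hb] at hb₁
  have hpx := left_ne_zero_of_mul hb₁.ne'
  have hc₁ := right_ne_zero_of_mul hb₁.ne'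
  rw [betaPM_div_alphaPM hY hrange hpos hcc ⟨y₀, hy₀⟩, hw, hb, hb,
    sum_mul_pr_R1_Y1_X1_eq_cpr_mul (hCI1 true), sum_mul_pr_R1_Y1_X1_eq_cpr_mul (hCI1 false)]
  field_simp

lemma thetaPM_eq_sum_mul_cpr [Fintype 𝒳] [MeasurableSpace 𝒳] [MeasurableSingletonClass 𝒳]
    (hY : Measurable Y1) (hX : Measurable X1) (hrange : ∀ ω, Y1 ω ∈ 𝒴)
    (hCI1 : ∀ x : 𝒳, 0 < pr μ {ω | X1 ω = x} → ∀ (r : Bool) (y : ℝ),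
      cpr μ {ω | R1 ω = r ∧ Y1 ω = y} {ω | X1 ω = x} =
        cpr μ {ω | R1 ω = r} {ω | X1 ω = x} * cpr μ {ω | Y1 ω = y} {ω | X1 ω = x})
    (hCI2a : ∀ y : ℝ, 0 < pr μ {ω | R1 ω = true ∧ Y1 ω = y} → ∀ (r : Bool) (x : 𝒳),
      cpr μ {ω | R2 ω = r ∧ X1 ω = x} {ω | R1 ω = true ∧ Y1 ω = y} =
        cpr μ {ω | R2 ω = r} {ω | R1 ω = true ∧ Y1 ω = y} *
          cpr μ {ω | X1 ω = x} {ω | R1 ω = true ∧ Y1 ω = y})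
    (hCI2b : ∀ (r : Bool) (y : ℝ) (x : 𝒳),
      cpr μ {ω | R2 ω = r ∧ Y1 ω = y ∧ X1 ω = x} {ω | R1 ω = false} =
        cpr μ {ω | R2 ω = r} {ω | R1 ω = false} *
          cpr μ {ω | Y1 ω = y ∧ X1 ω = x} {ω | R1 ω = false})
    (hpos1 : ∀ x : 𝒳, ∀ y ∈ 𝒴,
      0 < pr μ {ω | R1 ω = true ∧ R2 ω = true ∧ Y1 ω = y ∧ X1 ω = x})
    (hpos2 : 0 < pr μ {ω | R1 ω = false ∧ R2 ω = true}) :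
    thetaPM μ Y1 X1 R1 R2 𝒴 = ∑ y ∈ 𝒴, y * cpr μ {ω | Y1 ω = y} {ω | R1 ω = false} := by
  obtain ⟨ω₀, -⟩ := nonempty_of_measure_ne_zero fun h => hpos2.ne' (by rw [pr, h]; rfl)
  have hsummand (x : 𝒳) := betaPM_div_alphaPM_mul_cpr hY hrange
    (hCI1 x ((hpos1 x _ (hrange ω₀)).trans_le (pr_mono fun _ hω => hω.2.2.2)))
    (hpos1 x) (fun y hy => pr_complete_case_eq_zetaPM_mul
      (hCI2a y ((hpos1 x y hy).trans_le (pr_mono fun _ hω => ⟨hω.1, hω.2.2.1⟩)) true x))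
    (cpr_X1_R1_false_R2_true_eq_div hY hrange (fun y => hCI2b true y x) hpos2) ⟨_, hrange ω₀⟩
  rw [thetaPM, Finset.sum_congr rfl fun x _ => hsummand x, ← Finset.sum_div, Finset.sum_comm,
    Finset.sum_div]
  refine Finset.sum_congr rfl fun y _ => ?_
  rw [← Finset.mul_sum, cpr, mul_div_assoc,
    pr_eq_sum_pr_inter hX (fun _ => Finset.mem_univ _) ({ω | Y1 ω = y} ∩ {ω | R1 ω = false})]
  simp only [Set.ofPred_and, Set.inter_comm, Set.inter_left_comm]

end PermutationModel

theorem stmt6_general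
    {Ω : Type*} [MeasurableSpace Ω] (μ : Measure Ω) [IsProbabilityMeasure μ]
    {𝒳 : Type*} [Fintype 𝒳] [MeasurableSpace 𝒳] [MeasurableSingletonClass 𝒳]
    (Y1 : Ω → ℝ) (X1 : Ω → 𝒳) (R1 R2 : Ω → Bool)
    (hY1m : Measurable Y1) (hX1m : Measurable X1) (hR1m : Measurable R1)
    (𝒴 : Finset ℝ) (hrange : ∀ ω, Y1 ω ∈ 𝒴)
    (hCI1 : ∀ x : 𝒳, 0 < pr μ {ω | X1 ω = x} → ∀ (r : Bool) (y : ℝ),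
      cpr μ {ω | R1 ω = r ∧ Y1 ω = y} {ω | X1 ω = x} =
        cpr μ {ω | R1 ω = r} {ω | X1 ω = x} * cpr μ {ω | Y1 ω = y} {ω | X1 ω = x})
    (hCI2a : ∀ y : ℝ, 0 < pr μ {ω | R1 ω = true ∧ Y1 ω = y} → ∀ (r : Bool) (x : 𝒳),
      cpr μ {ω | R2 ω = r ∧ X1 ω = x} {ω | R1 ω = true ∧ Y1 ω = y} =
        cpr μ {ω | R2 ω = r} {ω | R1 ω = true ∧ Y1 ω = y} *
          cpr μ {ω | X1 ω = x} {ω | R1 ω = true ∧ Y1 ω = y})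
    (hCI2b : ∀ (r : Bool) (y : ℝ) (x : 𝒳),
      cpr μ {ω | R2 ω = r ∧ Y1 ω = y ∧ X1 ω = x} {ω | R1 ω = false} =
        cpr μ {ω | R2 ω = r} {ω | R1 ω = false} *
          cpr μ {ω | Y1 ω = y ∧ X1 ω = x} {ω | R1 ω = false})
    (hpos1 : ∀ x : 𝒳, ∀ y ∈ 𝒴,
      0 < pr μ {ω | R1 ω = true ∧ R2 ω = true ∧ Y1 ω = y ∧ X1 ω = x})
    (hpos2 : 0 < pr μ {ω | R1 ω = false ∧ R2 ω = true}) :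
    (∑ y ∈ 𝒴, y * pr μ {ω | Y1 ω = y}) =
        pr μ {ω | R1 ω = true} * (∑ y ∈ 𝒴, y * cpr μ {ω | Y1 ω = y} {ω | R1 ω = true}) +
          pr μ {ω | R1 ω = false} * thetaPM μ Y1 X1 R1 R2 𝒴 ∧
      thetaPM μ Y1 X1 R1 R2 𝒴 = ∑ y ∈ 𝒴, y * cpr μ {ω | Y1 ω = y} {ω | R1 ω = false} := by
  have hθ := thetaPM_eq_sum_mul_cpr hY1m hX1m hrange hCI1 hCI2a hCI2b hpos1 hpos2
  exact ⟨hθ ▸ sum_mul_pr_eq_add_sum_mul_cpr hR1m Y1 𝒴, hθ⟩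

/-- **`θ` identifies `E(Y¹ | R₁ = 0)` in the permutation missingness model.**
With `ζ, α, β, θ` as above, one has
`E(Y¹) = P(R₁=1) E(Y¹ | R₁=1) + P(R₁=0) θ` and moreover `θ = E(Y¹ | R₁=0)`,
all expectations being finite sums over the range `𝒴`. -/
theorem stmt6
    {Ω : Type*} [MeasurableSpace Ω] (μ : Measure Ω) [IsProbabilityMeasure μ]
    {𝒳 : Type*} [Fintype 𝒳] [MeasurableSpace 𝒳] [MeasurableSingletonClass 𝒳]
    (Y1 : Ω → ℝ) (X1 : Ω → 𝒳) (R1 R2 : Ω → Bool)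
    (hY1m : Measurable Y1) (hX1m : Measurable X1) (hR1m : Measurable R1)
    (hR2m : Measurable R2)
    (𝒴 : Finset ℝ) (hrange : ∀ ω, Y1 ω ∈ 𝒴)
    (hCI1 : ∀ x : 𝒳, 0 < pr μ {ω | X1 ω = x} → ∀ (r : Bool) (y : ℝ),
      cpr μ {ω | R1 ω = r ∧ Y1 ω = y} {ω | X1 ω = x} =
        cpr μ {ω | R1 ω = r} {ω | X1 ω = x} * cpr μ {ω | Y1 ω = y} {ω | X1 ω = x})
    (hCI2a : ∀ y : ℝ, 0 < pr μ {ω | R1 ω = true ∧ Y1 ω = y} → ∀ (r : Bool) (x : 𝒳),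
      cpr μ {ω | R2 ω = r ∧ X1 ω = x} {ω | R1 ω = true ∧ Y1 ω = y} =
        cpr μ {ω | R2 ω = r} {ω | R1 ω = true ∧ Y1 ω = y} *
          cpr μ {ω | X1 ω = x} {ω | R1 ω = true ∧ Y1 ω = y})
    (hCI2b : ∀ (r : Bool) (y : ℝ) (x : 𝒳),
      cpr μ {ω | R2 ω = r ∧ Y1 ω = y ∧ X1 ω = x} {ω | R1 ω = false} =
        cpr μ {ω | R2 ω = r} {ω | R1 ω = false} *
          cpr μ {ω | Y1 ω = y ∧ X1 ω = x} {ω | R1 ω = false})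
    (hpos1 : ∀ x : 𝒳, ∀ y ∈ 𝒴,
      0 < pr μ {ω | R1 ω = true ∧ R2 ω = true ∧ Y1 ω = y ∧ X1 ω = x})
    (hpos2 : 0 < pr μ {ω | R1 ω = false ∧ R2 ω = true}) :
    (∑ y ∈ 𝒴, y * pr μ {ω | Y1 ω = y}) =
        pr μ {ω | R1 ω = true} * (∑ y ∈ 𝒴, y * cpr μ {ω | Y1 ω = y} {ω | R1 ω = true}) +
          pr μ {ω | R1 ω = false} * thetaPM μ Y1 X1 R1 R2 𝒴 ∧
      thetaPM μ Y1 X1 R1 R2 𝒴 = ∑ y ∈ 𝒴, y * cpr μ {ω | Y1 ω = y} {ω | R1 ω = false} :=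
  stmt6_general μ Y1 X1 R1 R2 hY1m hX1m hR1m 𝒴 hrange hCI1 hCI2a hCI2b hpos1 hpos2
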